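/- Let k be an integer, I and H multigraphs on the finite set V, U ⊆ V, and let f and P be as defined. Let x ∈ P satisfy x_e > 0 for every e ∈ E. Call cuts A, B x-uncrossable if at least one of the following holds: (a) A∩B and A∪B are both x-tight and χ_{δ_E(A)} + χ_{δ_E(B)} = χ_{δ_E(A∩B)} + χ_{δ_E(A∪B)}; (b) A\B and B\A are both x-tight and χ_{δ_E(A)} + χ_{δ_E(B)} = χ_{δ_E(A\B)} + χ_{δ_E(B\A)}. If A and B are f-positive x-tight cuts that are not x-uncrossable, then A and B cross, A∩B = {u} or V\(A∪B) = {u} for some u ∈ U, and A\B = {v} or B\A = {v} for some v ∈ U. -/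

import Mathlib

open Finset

variable {V : Type*} [Fintype V] [DecidableEq V] {E : Type*} [Fintype E] [DecidableEq E]

/-- `d_m(S,T)`: total multiplicity of edges of the multigraph `m` with one end in `S` and
the other in `T` (for disjoint `S`, `T`). -/
def dBetween (m : V → V → ℕ) (S T : Finset V) : ℕ := ∑ u ∈ S, ∑ v ∈ T, m u v

/-- `d_m(S) = d_m(S, V \ S)`. -/
def degS (m : V → V → ℕ) (S : Finset V) : ℕ := dBetween m S Sᶜ

/-- Edges of the edge-indexed multigraph `(V, E)` (endpoint map `ends`) with exactly one
endpoint in `S`. -/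
def cutEdges (ends : E → V × V) (S : Finset V) : Finset E :=
  univ.filter fun e => ((ends e).1 ∈ S ∧ (ends e).2 ∉ S) ∨ ((ends e).1 ∉ S ∧ (ends e).2 ∈ S)

/-- A cut is a nonempty proper subset of `V`. -/
def IsCut (S : Finset V) : Prop := S.Nonempty ∧ S ≠ univ

/-- The relaxed residual function `f`:
`f(S) = k - d_I(S) - 2 d_H(S) - 2` if `S = {u}` or `V \ S = {u}` for some `u ∈ U`,
and `f(S) = k - d_I(S) - 2 d_H(S)` otherwise. -/
def fRes (k : ℤ) (I H : V → V → ℕ) (U : Finset V) (S : Finset V) : ℤ :=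
  if ∃ u ∈ U, S = {u} ∨ Sᶜ = {u} then
    k - (degS I S : ℤ) - 2 * (degS H S : ℤ) - 2
  else
    k - (degS I S : ℤ) - 2 * (degS H S : ℤ)

/-- The polytope `P = {x ∈ [0,1]^E : x(δ_E(S)) ≥ f(S) for every cut S}`. -/
def polyP (k : ℤ) (I H : V → V → ℕ) (U : Finset V) (ends : E → V × V) : Set (E → ℝ) :=
  {x | (∀ e, 0 ≤ x e ∧ x e ≤ 1) ∧
    ∀ S : Finset V, IsCut S → (fRes k I H U S : ℝ) ≤ ∑ e ∈ cutEdges ends S, x e}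

/-- A set `S` is `x`-tight if `x(δ_E(S)) = f(S)`. -/
def IsTight (k : ℤ) (I H : V → V → ℕ) (U : Finset V) (ends : E → V × V) (x : E → ℝ)
    (S : Finset V) : Prop :=
  ∑ e ∈ cutEdges ends S, x e = (fRes k I H U S : ℝ)

/-- An `x`-core: an inclusion-minimal `f`-positive `x`-tight cut. -/
def IsCore (k : ℤ) (I H : V → V → ℕ) (U : Finset V) (ends : E → V × V) (x : E → ℝ)
    (C : Finset V) : Prop :=
  IsCut C ∧ 0 < fRes k I H U C ∧ IsTight k I H U ends x C ∧
    ∀ C' : Finset V, C' ⊂ C → IsCut C' → 0 < fRes k I H U C' →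
      IsTight k I H U ends x C' → False

/-- The incidence vector `χ_{δ_E(S)} ∈ ℝ^E` of the cut edge set `δ_E(S)`. -/
def chiCut (ends : E → V × V) (S : Finset V) : E → ℝ :=
  fun e => if e ∈ cutEdges ends S then 1 else 0

/-- Cuts `A`, `B` cross if `A ∩ B`, `A \ B`, `B \ A` and `V \ (A ∪ B)` are all nonempty. -/
def Crosses (A B : Finset V) : Prop :=
  (A ∩ B).Nonempty ∧ (A \ B).Nonempty ∧ (B \ A).Nonempty ∧ ((A ∪ B)ᶜ).Nonempty

/-- Cuts `A`, `B` are `x`-uncrossable if either (a) `A ∩ B` and `A ∪ B` are both `x`-tight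
and `χ_{δ(A)} + χ_{δ(B)} = χ_{δ(A ∩ B)} + χ_{δ(A ∪ B)}`, or (b) `A \ B` and `B \ A` are
both `x`-tight and `χ_{δ(A)} + χ_{δ(B)} = χ_{δ(A \ B)} + χ_{δ(B \ A)}`. -/
def Uncrossable (k : ℤ) (I H : V → V → ℕ) (U : Finset V) (ends : E → V × V) (x : E → ℝ)
    (A B : Finset V) : Prop :=
  (IsTight k I H U ends x (A ∩ B) ∧ IsTight k I H U ends x (A ∪ B) ∧
    chiCut ends A + chiCut ends B = chiCut ends (A ∩ B) + chiCut ends (A ∪ B)) ∨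
  (IsTight k I H U ends x (A \ B) ∧ IsTight k I H U ends x (B \ A) ∧
    chiCut ends A + chiCut ends B = chiCut ends (A \ B) + chiCut ends (B \ A))

/-!
The cut functions `S ↦ x(δ_E(S))` and `S ↦ d_m(S)` are submodular and invariant under
complementation, so `f` without its `-2` correction is supermodular. For tight `A`, `B` this gives
`x(δ(A ∩ B)) + x(δ(A ∪ B)) ≤ x(δ(A)) + x(δ(B)) = f(A) + f(B) ≤ f(A ∩ B) + f(A ∪ B)` as long as
the correction does not apply to `A ∩ B` or `A ∪ B`; with `x ∈ P` this forces equality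
throughout, which is (a), since `x > 0` turns equality of the weighted sums into equality of the
incidence vectors. If `A`, `B` cross, `A ∪ B` and `V \ (A ∩ B)` have two points, so a failure
of (a) leaves `A ∩ B` or `V \ (A ∪ B)` a singleton of `U`. Non-crossing pairs are trivially
uncrossable, and (b) for `A`, `B` is (a) for `A`, `V \ B`.
-/

def fBase (k : ℤ) (I H : V → V → ℕ) (S : Finset V) : ℤ :=
  k - (degS I S : ℤ) - 2 * (degS H S : ℤ)

/-- Condition (a) of `Uncrossable`. -/
def UncrossableInterUnion (k : ℤ) (I H : V → V → ℕ) (U : Finset V) (ends : E → V × V)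
    (x : E → ℝ) (A B : Finset V) : Prop :=
  IsTight k I H U ends x (A ∩ B) ∧ IsTight k I H U ends x (A ∪ B) ∧
    chiCut ends A + chiCut ends B = chiCut ends (A ∩ B) + chiCut ends (A ∪ B)

omit [Fintype V] [DecidableEq V] in
lemma dBetween_comm {m : V → V → ℕ} (hm : ∀ a b, m a b = m b a) (S T : Finset V) :
    dBetween m S T = dBetween m T S := by
  unfold dBetween
  rw [Finset.sum_comm]
  exact sum_congr rfl fun v _ => sum_congr rfl fun u _ => hm u v

lemma degS_compl {m : V → V → ℕ} (hm : ∀ a b, m a b = m b a) (S : Finset V) :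
    degS m Sᶜ = degS m S := by
  rw [degS, degS, compl_compl, dBetween_comm hm]

lemma degS_eq_sum_ite (m : V → V → ℕ) (S : Finset V) :
    degS m S = ∑ u, ∑ v, if u ∈ S ∧ v ∉ S then m u v else 0 := by
  simp_rw [← mem_compl (s := S), ite_and, sum_ite_irrel, sum_const_zero, sum_ite_mem,
    univ_inter]
  rfl

lemma degS_inter_add_degS_union_le (m : V → V → ℕ) (A B : Finset V) :
    degS m (A ∩ B) + degS m (A ∪ B) ≤ degS m A + degS m B := by
  simp only [degS_eq_sum_ite, ← sum_add_distrib]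
  refine sum_le_sum fun u _ => sum_le_sum fun v _ => ?_
  by_cases hu₁ : u ∈ A <;> by_cases hu₂ : u ∈ B <;> by_cases hv₁ : v ∈ A <;>
    by_cases hv₂ : v ∈ B <;> simp [hu₁, hu₂, hv₁, hv₂]

lemma fRes_eq_ite (k : ℤ) (I H : V → V → ℕ) (U S : Finset V) :
    fRes k I H U S = if ∃ u ∈ U, S = {u} ∨ Sᶜ = {u} then fBase k I H S - 2 else fBase k I H S :=
  rfl

lemma fRes_le_fBase (k : ℤ) (I H : V → V → ℕ) (U S : Finset V) :
    fRes k I H U S ≤ fBase k I H S := by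
  rw [fRes_eq_ite]
  split <;> omega

lemma fRes_eq_fBase {k : ℤ} {I H : V → V → ℕ} {U S : Finset V}
    (h : ∀ u ∈ U, S ≠ {u} ∧ Sᶜ ≠ {u}) :
    fRes k I H U S = fBase k I H S := by
  rw [fRes_eq_ite, if_neg]
  rintro ⟨u, hu, hS | hS⟩
  exacts [(h u hu).1 hS, (h u hu).2 hS]

lemma fBase_add_fBase_le (k : ℤ) (I H : V → V → ℕ) (A B : Finset V) :
    fBase k I H A + fBase k I H B ≤ fBase k I H (A ∩ B) + fBase k I H (A ∪ B) := by
  have hI := degS_inter_add_degS_union_le I A B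
  have hH := degS_inter_add_degS_union_le H A B
  simp only [fBase]
  omega

lemma fRes_compl {k : ℤ} {I H : V → V → ℕ} {U : Finset V} (hI : ∀ a b, I a b = I b a)
    (hH : ∀ a b, H a b = H b a) (S : Finset V) :
    fRes k I H U Sᶜ = fRes k I H U S := by
  simp only [fRes_eq_ite, fBase, degS_compl hI, degS_compl hH, compl_compl, or_comm]

section EdgeCuts

variable (ends : E → V × V)

omit [DecidableEq E] in
lemma cutEdges_compl (S : Finset V) : cutEdges ends Sᶜ = cutEdges ends S := by
  ext e
  simp only [cutEdges, mem_filter, mem_univ, true_and, mem_compl, not_not]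
  tauto

lemma chiCut_compl (S : Finset V) : chiCut ends Sᶜ = chiCut ends S := by
  unfold chiCut
  rw [cutEdges_compl]

omit [Fintype V] in
lemma sum_cutEdges_eq_sum_chiCut_mul (x : E → ℝ) (S : Finset V) :
    ∑ e ∈ cutEdges ends S, x e = ∑ e, chiCut ends S e * x e := by
  simp only [chiCut, ite_mul, one_mul, zero_mul, sum_ite_mem, univ_inter]

omit [Fintype V] in
lemma chiCut_inter_add_chiCut_union_le (A B : Finset V) (e : E) :
    chiCut ends (A ∩ B) e + chiCut ends (A ∪ B) e ≤ chiCut ends A e + chiCut ends B e := by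
  simp only [chiCut, cutEdges, mem_filter, mem_univ, true_and, mem_inter, mem_union]
  by_cases h₁ : (ends e).1 ∈ A <;> by_cases h₂ : (ends e).1 ∈ B <;>
    by_cases h₃ : (ends e).2 ∈ A <;> by_cases h₄ : (ends e).2 ∈ B <;>
    norm_num [h₁, h₂, h₃, h₄]

variable {ends} {x : E → ℝ}

omit [Fintype V] in
lemma sum_cutEdges_inter_add_union_le (hx : ∀ e, 0 ≤ x e) (A B : Finset V) :
    ∑ e ∈ cutEdges ends (A ∩ B), x e + ∑ e ∈ cutEdges ends (A ∪ B), x e ≤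
      ∑ e ∈ cutEdges ends A, x e + ∑ e ∈ cutEdges ends B, x e := by
  simp only [sum_cutEdges_eq_sum_chiCut_mul, ← sum_add_distrib, ← add_mul]
  exact sum_le_sum fun e _ =>
    mul_le_mul_of_nonneg_right (chiCut_inter_add_chiCut_union_le ends A B e) (hx e)

omit [Fintype V] in
lemma chiCut_add_eq_of_sum_cutEdges_eq (hx : ∀ e, 0 < x e) {A B : Finset V}
    (h : ∑ e ∈ cutEdges ends (A ∩ B), x e + ∑ e ∈ cutEdges ends (A ∪ B), x e =
      ∑ e ∈ cutEdges ends A, x e + ∑ e ∈ cutEdges ends B, x e) :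
    chiCut ends A + chiCut ends B = chiCut ends (A ∩ B) + chiCut ends (A ∪ B) := by
  simp only [sum_cutEdges_eq_sum_chiCut_mul, ← sum_add_distrib, ← add_mul] at h
  funext e
  by_contra hne
  have hlt : (chiCut ends (A ∩ B) e + chiCut ends (A ∪ B) e) * x e <
      (chiCut ends A e + chiCut ends B e) * x e :=
    mul_lt_mul_of_pos_right
      ((chiCut_inter_add_chiCut_union_le ends A B e).lt_of_ne fun h' => hne h'.symm) (hx e)
  exact h.not_lt (sum_lt_sum (fun e _ => mul_le_mul_of_nonneg_right
    (chiCut_inter_add_chiCut_union_le ends A B e) (hx e).le) ⟨e, mem_univ e, hlt⟩)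

end EdgeCuts

section Uncrossing

variable {k : ℤ} {I H : V → V → ℕ} {U : Finset V} {ends : E → V × V} {x : E → ℝ}
  {A B : Finset V}

omit [DecidableEq E] in
lemma isTight_compl (hI : ∀ a b, I a b = I b a) (hH : ∀ a b, H a b = H b a) (S : Finset V) :
    IsTight k I H U ends x Sᶜ ↔ IsTight k I H U ends x S := by
  rw [IsTight, IsTight, cutEdges_compl, fRes_compl hI hH]

lemma uncrossableInterUnion_comm :
    UncrossableInterUnion k I H U ends x A B ↔ UncrossableInterUnion k I H U ends x B A := by
  rw [UncrossableInterUnion, UncrossableInterUnion, inter_comm, union_comm,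
    add_comm (chiCut ends A)]

lemma uncrossableInterUnion_of_subset (htA : IsTight k I H U ends x A)
    (htB : IsTight k I H U ends x B) (hAB : A ⊆ B) : UncrossableInterUnion k I H U ends x A B := by
  rw [UncrossableInterUnion, inter_eq_left.2 hAB, union_eq_right.2 hAB]
  exact ⟨htA, htB, rfl⟩

lemma uncrossable_iff (hI : ∀ a b, I a b = I b a) (hH : ∀ a b, H a b = H b a) :
    Uncrossable k I H U ends x A B ↔
      UncrossableInterUnion k I H U ends x A B ∨ UncrossableInterUnion k I H U ends x A Bᶜ := by
  have hinter : A ∩ Bᶜ = A \ B := (sdiff_eq_inter_compl A B).symm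
  have hunion : A ∪ Bᶜ = (B \ A)ᶜ := by ext; simp; tauto
  rw [Uncrossable, UncrossableInterUnion, UncrossableInterUnion, hinter, hunion,
    isTight_compl hI hH, chiCut_compl, chiCut_compl]

lemma crosses_compl_right (h : Crosses A B) : Crosses A Bᶜ := by
  obtain ⟨hinter, hAB, hBA, hout⟩ := h
  refine ⟨?_, ?_, ?_, ?_⟩
  · rwa [← sdiff_eq_inter_compl]
  · rwa [sdiff_compl]
  · rwa [sdiff_eq_inter_compl, inter_comm, ← compl_union]
  · rwa [compl_union, compl_compl, inter_comm, ← sdiff_eq_inter_compl]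

lemma uncrossableInterUnion_of_fRes_eq (hxP : x ∈ polyP k I H U ends) (hxe : ∀ e, 0 < x e)
    (htA : IsTight k I H U ends x A) (htB : IsTight k I H U ends x B)
    (hcutI : IsCut (A ∩ B)) (hcutU : IsCut (A ∪ B))
    (hfI : fRes k I H U (A ∩ B) = fBase k I H (A ∩ B))
    (hfU : fRes k I H U (A ∪ B) = fBase k I H (A ∪ B)) :
    UncrossableInterUnion k I H U ends x A B := by
  have hx := sum_cutEdges_inter_add_union_le (ends := ends) (fun e => (hxe e).le) A B
  have hf : fRes k I H U A + fRes k I H U B ≤ fRes k I H U (A ∩ B) + fRes k I H U (A ∪ B) := by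
    have := fBase_add_fBase_le k I H A B
    have := fRes_le_fBase k I H U A
    have := fRes_le_fBase k I H U B
    omega
  have hf' : (fRes k I H U A : ℝ) + fRes k I H U B ≤
      fRes k I H U (A ∩ B) + fRes k I H U (A ∪ B) := by exact_mod_cast hf
  have hPI := hxP.2 _ hcutI
  have hPU := hxP.2 _ hcutU
  rw [IsTight] at htA htB
  refine ⟨by rw [IsTight]; linarith, by rw [IsTight]; linarith, ?_⟩
  exact chiCut_add_eq_of_sum_cutEdges_eq hxe (by linarith)

lemma exists_singleton_of_crosses (hxP : x ∈ polyP k I H U ends) (hxe : ∀ e, 0 < x e)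
    (htA : IsTight k I H U ends x A) (htB : IsTight k I H U ends x B) (hcr : Crosses A B)
    (hnu : ¬ UncrossableInterUnion k I H U ends x A B) :
    ∃ u ∈ U, A ∩ B = {u} ∨ (A ∪ B)ᶜ = {u} := by
  by_contra! hsingle
  obtain ⟨hinter, ⟨a, ha⟩, ⟨b, hb⟩, hout⟩ := hcr
  rw [mem_sdiff] at ha hb
  have hab : a ≠ b := by rintro rfl; exact ha.2 hb.1
  have hcompl : (A ∩ B)ᶜ.Nontrivial := ⟨a, by simp [ha.2], b, by simp [hb.2], hab⟩
  have hunion : (A ∪ B).Nontrivial := ⟨a, by simp [ha.1], b, by simp [hb.1], hab⟩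
  refine hnu (uncrossableInterUnion_of_fRes_eq hxP hxe htA htB ?_ ?_ ?_ ?_)
  · exact ⟨hinter, fun h => by simp [h] at hcompl⟩
  · exact ⟨hunion.nonempty, fun h => by simp [h] at hout⟩
  · exact fRes_eq_fBase fun u hu => ⟨hsingle u hu |>.1, hcompl.ne_singleton⟩
  · exact fRes_eq_fBase fun u hu => ⟨hunion.ne_singleton, hsingle u hu |>.2⟩

lemma crosses_of_not_uncrossable (hI : ∀ a b, I a b = I b a) (hH : ∀ a b, H a b = H b a)
    (htA : IsTight k I H U ends x A) (htB : IsTight k I H U ends x B)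
    (hnc : ¬ Uncrossable k I H U ends x A B) : Crosses A B := by
  have htBc : IsTight k I H U ends x Bᶜ := (isTight_compl hI hH B).2 htB
  rw [uncrossable_iff hI hH] at hnc
  by_contra hcr
  simp only [Crosses, not_and_or, not_nonempty_iff_eq_empty, sdiff_eq_empty_iff_subset] at hcr
  rcases hcr with hdisj | hAB | hBA | hcover
  · refine hnc (Or.inr (uncrossableInterUnion_of_subset htA htBc fun v hv => ?_))
    exact mem_compl.2 fun hvB => by simpa [hdisj] using mem_inter.2 ⟨hv, hvB⟩
  · exact hnc (Or.inl (uncrossableInterUnion_of_subset htA htB hAB))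
  · exact hnc (Or.inl (uncrossableInterUnion_comm.1 (uncrossableInterUnion_of_subset htB htA hBA)))
  · refine hnc (Or.inr (uncrossableInterUnion_comm.1
      (uncrossableInterUnion_of_subset htBc htA fun v hv => ?_)))
    by_contra hvA
    have hvout : v ∈ (A ∪ B)ᶜ := by simp [hvA, mem_compl.1 hv]
    simp [hcover] at hvout

end Uncrossing

theorem not_uncrossable_cuts_cross_general
    (k : ℤ) (I H : V → V → ℕ)
    (hIsymm : ∀ a b, I a b = I b a) (hHsymm : ∀ a b, H a b = H b a)
    (U : Finset V) (ends : E → V × V)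
    (x : E → ℝ) (hxP : x ∈ polyP k I H U ends) (hxe : ∀ e, 0 < x e)
    (A B : Finset V)
    (htA : IsTight k I H U ends x A) (htB : IsTight k I H U ends x B)
    (hnc : ¬ Uncrossable k I H U ends x A B) :
    Crosses A B ∧
    (∃ u ∈ U, A ∩ B = {u} ∨ (A ∪ B)ᶜ = {u}) ∧
    (∃ v ∈ U, A \ B = {v} ∨ B \ A = {v}) := by
  have hcr := crosses_of_not_uncrossable hIsymm hHsymm htA htB hnc
  rw [uncrossable_iff hIsymm hHsymm, not_or] at hnc
  refine ⟨hcr, exists_singleton_of_crosses hxP hxe htA htB hcr hnc.1, ?_⟩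
  obtain ⟨v, hv, h⟩ := exists_singleton_of_crosses hxP hxe htA
    ((isTight_compl hIsymm hHsymm B).2 htB) (crosses_compl_right hcr) hnc.2
  rw [← sdiff_eq_inter_compl, compl_union, compl_compl, inter_comm, ← sdiff_eq_inter_compl] at h
  exact ⟨v, hv, h⟩

/-- Claim in Lemma 4.3: if `A`, `B` are `f`-positive `x`-tight cuts that are not
`x`-uncrossable, then `A`, `B` cross, `A ∩ B` or `V \ (A ∪ B)` is a singleton of `U`,
and `A \ B` or `B \ A` is a singleton of `U`. -/
theorem not_uncrossable_cuts_cross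
    (k : ℤ) (I H : V → V → ℕ)
    (hIsymm : ∀ a b, I a b = I b a) (hHsymm : ∀ a b, H a b = H b a)
    (U : Finset V) (ends : E → V × V)
    (x : E → ℝ) (hxP : x ∈ polyP k I H U ends) (hxe : ∀ e, 0 < x e)
    (A B : Finset V) (hA : IsCut A) (hB : IsCut B)
    (hfA : 0 < fRes k I H U A) (hfB : 0 < fRes k I H U B)
    (htA : IsTight k I H U ends x A) (htB : IsTight k I H U ends x B)
    (hnc : ¬ Uncrossable k I H U ends x A B) :
    Crosses A B ∧
    (∃ u ∈ U, A ∩ B = {u} ∨ (A ∪ B)ᶜ = {u}) ∧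
    (∃ v ∈ U, A \ B = {v} ∨ B \ A = {v}) :=
  not_uncrossable_cuts_cross_general k I H hIsymm hHsymm U ends x hxP hxe A B htA htB hnc
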